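/- arXiv:1903.04929 — 5 statements merged into one kernel-verified Lean document; each statement's English description precedes it below -/
import Mathlib

section
/- For a spherical triangle with sides a, b, c and opposite angles α, β, one has tan(α/2)/tan(β/2) = sin(s−b)/sin(s−a), where s = (a+b+c)/2. -/
open Real

lemma tan_half_eq' (x : ℝ) (hx : x ∈ Set.Ioo 0 π) :
    Real.tan (x/2) = (1 - Real.cos x) / Real.sin x := by
  obtain ⟨h0, hπ⟩ := hx
  have hs : Real.sin (x/2) > 0 :=
    Real.sin_pos_of_pos_of_lt_pi (by linarith) (by linarith [Real.pi_pos])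
  have hc : Real.cos (x/2) > 0 :=
    Real.cos_pos_of_mem_Ioo ⟨by linarith [Real.pi_pos], by linarith⟩
  have h1 : Real.sin x = 2 * Real.sin (x/2) * Real.cos (x/2) := by
    have := Real.sin_two_mul (x/2); rwa [show 2*(x/2) = x by ring] at this
  have hp := Real.sin_sq_add_cos_sq (x/2)
  have hct : Real.cos x = 2 * Real.cos (x/2)^2 - 1 := by
    have := Real.cos_two_mul (x/2); rwa [show 2*(x/2) = x by ring] at this
  have h2 : 1 - Real.cos x = 2 * Real.sin (x/2)^2 := by linarith
  rw [Real.tan_eq_sin_div_cos, h1, h2]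
  field_simp

set_option maxHeartbeats 1000000 in
theorem spherical_half_angle_ratio
    (a b c α β : ℝ)
    (ha : a ∈ Set.Ioo 0 π) (hb : b ∈ Set.Ioo 0 π) (hc : c ∈ Set.Ioo 0 π)
    (hab : c < a + b) (hbc : a < b + c) (hca : b < c + a)
    (hper : a + b + c < 2*π)
    (hα : α ∈ Set.Ioo 0 π) (hβ : β ∈ Set.Ioo 0 π)
    (hcosa : Real.cos a = Real.cos b * Real.cos c + Real.sin b * Real.sin c * Real.cos α)
    (hcosb : Real.cos b = Real.cos a * Real.cos c + Real.sin a * Real.sin c * Real.cos β) :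
    Real.tan (α/2) / Real.tan (β/2) =
      Real.sin ((a+b+c)/2 - b) / Real.sin ((a+b+c)/2 - a) := by
  obtain ⟨ha0, haπ⟩ := ha
  obtain ⟨hb0, hbπ⟩ := hb
  obtain ⟨hc0, hcπ⟩ := hc
  obtain ⟨hα0, hαπ⟩ := hα
  obtain ⟨hβ0, hβπ⟩ := hβ
  have hsa : Real.sin a > 0 := Real.sin_pos_of_pos_of_lt_pi ha0 haπ
  have hsb : Real.sin b > 0 := Real.sin_pos_of_pos_of_lt_pi hb0 hbπ
  have hsc : Real.sin c > 0 := Real.sin_pos_of_pos_of_lt_pi hc0 hcπ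
  have hsα : Real.sin α > 0 := Real.sin_pos_of_pos_of_lt_pi hα0 hαπ
  have hsβ : Real.sin β > 0 := Real.sin_pos_of_pos_of_lt_pi hβ0 hβπ
  have hSa : Real.sin ((a+b+c)/2 - a) > 0 := by
    apply Real.sin_pos_of_pos_of_lt_pi <;> [linarith; linarith]
  have hSb : Real.sin ((a+b+c)/2 - b) > 0 := by
    apply Real.sin_pos_of_pos_of_lt_pi <;> [linarith; linarith]
  have hSc : Real.sin ((a+b+c)/2 - c) > 0 := by
    apply Real.sin_pos_of_pos_of_lt_pi <;> [linarith; linarith]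
  have hcα : Real.cos α * (Real.sin b * Real.sin c) = Real.cos a - Real.cos b * Real.cos c := by
    linear_combination -hcosa
  have hcβ : Real.cos β * (Real.sin a * Real.sin c) = Real.cos b - Real.cos a * Real.cos c := by
    linear_combination -hcosb
  -- product formulas
  have keyα : Real.cos (c - b) - Real.cos a =
      2 * Real.sin ((a+b+c)/2 - b) * Real.sin ((a+b+c)/2 - c) := by
    rw [Real.cos_sub_cos,
      show (c - b - a)/2 = -((a+b+c)/2 - c) by ring,
      show (c - b + a)/2 = (a+b+c)/2 - b by ring, Real.sin_neg]
    ring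
  have keyβ : Real.cos (c - a) - Real.cos b =
      2 * Real.sin ((a+b+c)/2 - a) * Real.sin ((a+b+c)/2 - c) := by
    rw [Real.cos_sub_cos,
      show (c - a - b)/2 = -((a+b+c)/2 - c) by ring,
      show (c - a + b)/2 = (a+b+c)/2 - a by ring, Real.sin_neg]
    ring
  rw [Real.cos_sub] at keyα keyβ
  have E1 : (1 - Real.cos α) * (Real.sin b * Real.sin c) =
      2 * Real.sin ((a+b+c)/2 - b) * Real.sin ((a+b+c)/2 - c) := by
    linear_combination keyα - hcα
  have E2 : (1 - Real.cos β) * (Real.sin a * Real.sin c) =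
      2 * Real.sin ((a+b+c)/2 - a) * Real.sin ((a+b+c)/2 - c) := by
    linear_combination keyβ - hcβ
  -- law of sines
  have pα := Real.sin_sq_add_cos_sq α
  have pβ := Real.sin_sq_add_cos_sq β
  have pa := Real.sin_sq_add_cos_sq a
  have pb := Real.sin_sq_add_cos_sq b
  have pc := Real.sin_sq_add_cos_sq c
  have hsq : (Real.sin α * Real.sin b * Real.sin c)^2 =
      (Real.sin β * Real.sin a * Real.sin c)^2 := by
    have h1 : (Real.cos α * (Real.sin b * Real.sin c))^2 =
        (Real.cos a - Real.cos b * Real.cos c)^2 := by rw [hcα]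
    have h2 : (Real.cos β * (Real.sin a * Real.sin c))^2 =
        (Real.cos b - Real.cos a * Real.cos c)^2 := by rw [hcβ]
    linear_combination (Real.sin b * Real.sin c)^2 * pα - (Real.sin a * Real.sin c)^2 * pβ
      - h1 + h2 + Real.sin c^2 * pb - Real.sin c^2 * pa
      + (Real.cos a^2 - Real.cos b^2) * pc
  have E3 : Real.sin α * Real.sin b = Real.sin β * Real.sin a := by
    have hz : (Real.sin α * Real.sin b * Real.sin c - Real.sin β * Real.sin a * Real.sin c) *
        (Real.sin α * Real.sin b * Real.sin c + Real.sin β * Real.sin a * Real.sin c) = 0 := by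
      linear_combination hsq
    rcases mul_eq_zero.mp hz with h | h
    · have : Real.sin α * Real.sin b * Real.sin c = Real.sin β * Real.sin a * Real.sin c := by
        linarith
      exact mul_right_cancel₀ (ne_of_gt hsc) this
    · linarith [mul_pos (mul_pos hsα hsb) hsc, mul_pos (mul_pos hsβ hsa) hsc]
  rw [tan_half_eq' α ⟨hα0, hαπ⟩, tan_half_eq' β ⟨hβ0, hβπ⟩]
  have h1cβ : 1 - Real.cos β > 0 := by
    have hs2 : Real.sin (β/2) > 0 :=
      Real.sin_pos_of_pos_of_lt_pi (by linarith) (by linarith [Real.pi_pos])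
    have hct : Real.cos β = 2 * Real.cos (β/2)^2 - 1 := by
      have := Real.cos_two_mul (β/2); rwa [show 2*(β/2) = β by ring] at this
    have hp := Real.sin_sq_add_cos_sq (β/2)
    have hsq : Real.sin (β/2)^2 > 0 := pow_pos hs2 2
    linarith
  have goal' : ((1 - Real.cos α) * Real.sin β * Real.sin ((a+b+c)/2 - a)) *
      (Real.sin a * Real.sin b * Real.sin c) =
      (Real.sin ((a+b+c)/2 - b) * ((1 - Real.cos β) * Real.sin α)) *
      (Real.sin a * Real.sin b * Real.sin c) := by
    linear_combination (Real.sin β * Real.sin ((a+b+c)/2 - a) * Real.sin a) * E1 -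
      (Real.sin α * Real.sin ((a+b+c)/2 - b) * Real.sin b) * E2 +
      (-2 * Real.sin ((a+b+c)/2 - a) * Real.sin ((a+b+c)/2 - b) * Real.sin ((a+b+c)/2 - c)) * E3
  have key : (1 - Real.cos α) * Real.sin β * Real.sin ((a+b+c)/2 - a) =
      Real.sin ((a+b+c)/2 - b) * ((1 - Real.cos β) * Real.sin α) :=
    mul_right_cancel₀ (mul_ne_zero (mul_ne_zero hsa.ne' hsb.ne') hsc.ne') goal'
  set Sa := Real.sin ((a+b+c)/2 - a) with hSa'
  set Sb := Real.sin ((a+b+c)/2 - b) with hSb'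
  rw [div_div_div_comm, div_eq_div_iff (by positivity) (by positivity)]
  field_simp [h1cβ.ne', hsβ.ne']
  linear_combination key
end

section
/- For two Euclidean triangles sharing a side of length c, if the differences of the other two side lengths are equal (a₁ − b₁ = a₂ − b₂), then the ratios of tangents of the half-angles adjacent to the shared side are equal: tan(α₁/2)/tan(β₁/2) = tan(α₂/2)/tan(β₂/2). -/
open Real

set_option maxHeartbeats 1600000

lemma tan_half_sq_aux (θ : ℝ) (h0 : 0 < θ) (hπ : θ < π) :
    Real.tan (θ/2)^2 = (1 - Real.cos θ)/(1 + Real.cos θ) := by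
  have hcpos : 0 < Real.cos (θ/2) :=
    Real.cos_pos_of_mem_Ioo ⟨by linarith [Real.pi_pos], by linarith⟩
  have hcsq : Real.cos (θ/2)^2 = (1 + Real.cos θ)/2 := by
    have := Real.cos_sq (θ/2)
    rw [show 2*(θ/2) = θ by ring] at this
    rw [this]; ring
  have hssq : Real.sin (θ/2)^2 = (1 - Real.cos θ)/2 := by
    have := Real.sin_sq_add_cos_sq (θ/2)
    nlinarith [hcsq]
  have hcos1 : (0:ℝ) < 1 + Real.cos θ := by nlinarith [hcpos, hcsq]
  rw [Real.tan_eq_sin_div_cos, div_pow, hcsq, hssq]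
  rw [div_div_div_comm, div_self (two_ne_zero), div_one]

lemma tan_half_pos_aux (θ : ℝ) (h0 : 0 < θ) (hπ : θ < π) : 0 < Real.tan (θ/2) :=
  Real.tan_pos_of_pos_of_lt_pi_div_two (by linarith) (by linarith)

theorem euclid_equal_diffs_equal_ratios
    (a₁ b₁ a₂ b₂ c α₁ β₁ α₂ β₂ : ℝ)
    (ha₁ : 0 < a₁) (hb₁ : 0 < b₁) (ha₂ : 0 < a₂) (hb₂ : 0 < b₂) (hc : 0 < c)
    (h₁ab : c < a₁ + b₁) (h₁bc : a₁ < b₁ + c) (h₁ca : b₁ < c + a₁)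
    (h₂ab : c < a₂ + b₂) (h₂bc : a₂ < b₂ + c) (h₂ca : b₂ < c + a₂)
    (hα₁ : α₁ ∈ Set.Ioo 0 π) (hβ₁ : β₁ ∈ Set.Ioo 0 π)
    (hα₂ : α₂ ∈ Set.Ioo 0 π) (hβ₂ : β₂ ∈ Set.Ioo 0 π)
    (hcosα₁ : Real.cos α₁ = (b₁^2 + c^2 - a₁^2) / (2*b₁*c))
    (hcosβ₁ : Real.cos β₁ = (a₁^2 + c^2 - b₁^2) / (2*a₁*c))
    (hcosα₂ : Real.cos α₂ = (b₂^2 + c^2 - a₂^2) / (2*b₂*c))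
    (hcosβ₂ : Real.cos β₂ = (a₂^2 + c^2 - b₂^2) / (2*a₂*c))
    (hdiff : a₁ - b₁ = a₂ - b₂) :
    Real.tan (α₁/2) / Real.tan (β₁/2) = Real.tan (α₂/2) / Real.tan (β₂/2) := by
  have hx₁ := tan_half_pos_aux α₁ hα₁.1 hα₁.2
  have hy₁ := tan_half_pos_aux β₁ hβ₁.1 hβ₁.2
  have hx₂ := tan_half_pos_aux α₂ hα₂.1 hα₂.2
  have hy₂ := tan_half_pos_aux β₂ hβ₂.1 hβ₂.2
  have hA₁ := tan_half_sq_aux α₁ hα₁.1 hα₁.2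
  have hB₁ := tan_half_sq_aux β₁ hβ₁.1 hβ₁.2
  have hA₂ := tan_half_sq_aux α₂ hα₂.1 hα₂.2
  have hB₂ := tan_half_sq_aux β₂ hβ₂.1 hβ₂.2
  have pA₁ : (0:ℝ) < 1 + Real.cos α₁ := by
    rw [hcosα₁, show (1:ℝ) + (b₁^2+c^2-a₁^2)/(2*b₁*c) = ((b₁+c-a₁)*(b₁+c+a₁))/(2*b₁*c) by
      field_simp; ring]
    apply div_pos (by nlinarith) (by positivity)
  have pB₁ : (0:ℝ) < 1 + Real.cos β₁ := by
    rw [hcosβ₁, show (1:ℝ) + (a₁^2+c^2-b₁^2)/(2*a₁*c) = ((a₁+c-b₁)*(a₁+c+b₁))/(2*a₁*c) by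
      field_simp; ring]
    apply div_pos (by nlinarith) (by positivity)
  have pA₂ : (0:ℝ) < 1 + Real.cos α₂ := by
    rw [hcosα₂, show (1:ℝ) + (b₂^2+c^2-a₂^2)/(2*b₂*c) = ((b₂+c-a₂)*(b₂+c+a₂))/(2*b₂*c) by
      field_simp; ring]
    apply div_pos (by nlinarith) (by positivity)
  have pB₂ : (0:ℝ) < 1 + Real.cos β₂ := by
    rw [hcosβ₂, show (1:ℝ) + (a₂^2+c^2-b₂^2)/(2*a₂*c) = ((a₂+c-b₂)*(a₂+c+b₂))/(2*a₂*c) by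
      field_simp; ring]
    apply div_pos (by nlinarith) (by positivity)
  have hkey : (Real.tan (α₁/2) * Real.tan (β₂/2))^2
      = (Real.tan (α₂/2) * Real.tan (β₁/2))^2 := by
    rw [mul_pow, mul_pow, hA₁, hB₂, hA₂, hB₁, div_mul_div_comm, div_mul_div_comm,
      div_eq_div_iff (by positivity) (by positivity)]
    rw [hcosα₁, hcosβ₁, hcosα₂, hcosβ₂]
    have hb2 : b₂ = a₂ - a₁ + b₁ := by linarith
    subst hb2
    field_simp
    ring
  have heq : Real.tan (α₁/2) * Real.tan (β₂/2) = Real.tan (α₂/2) * Real.tan (β₁/2) := by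
    nlinarith [hkey, mul_pos hx₁ hy₂, mul_pos hx₂ hy₁]
  rw [div_eq_div_iff hy₁.ne' hy₂.ne']
  linarith [heq]
end

section
/- Planar Ivory lemma for confocal conics: let E and E' be confocal ellipses and H and H' confocal hyperbolas, all with the same foci, given by x²/(A−λ) + y²/(B−λ) = 1 with parameters λ₁ < λ₁' < B < λ₂ < λ₂' < A. If P is an intersection point of E = Q(λ₁) with H = Q(λ₂), P' of E with H' = Q(λ₂'), Q of E' = Q(λ₁') with H, and Q' of E' with H', all chosen in the closed first quadrant, then the diagonal distances are equal: |PQ'| = |P'Q|. -/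
set_option maxHeartbeats 1000000

/-- Coordinates of the intersection of a confocal ellipse `Q(lam)` and
hyperbola `Q(mu)` in the closed first quadrant. -/
lemma ivory_coords (A B lam mu x y : ℝ)
    (hAB : B < A) (hlam : lam < B) (hmu : B < mu) (hmuA : mu < A)
    (hx : 0 ≤ x) (hy : 0 ≤ y)
    (h1 : x^2 / (A - lam) + y^2 / (B - lam) = 1)
    (h2 : x^2 / (A - mu) + y^2 / (B - mu) = 1) :
    x = Real.sqrt ((A - lam) * (A - mu) / (A - B)) ∧
    y = Real.sqrt ((B - lam) * (mu - B) / (A - B)) := by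
  have d1 : A - lam ≠ 0 := by linarith
  have d2 : B - lam ≠ 0 := by linarith
  have d3 : A - mu ≠ 0 := by linarith
  have d4 : B - mu ≠ 0 := by linarith
  have dAB : A - B ≠ 0 := by linarith
  have dml : mu - lam ≠ 0 := by linarith
  have e1 : x^2 * (B - lam) + y^2 * (A - lam) = (A - lam) * (B - lam) := by
    field_simp at h1; linear_combination h1
  have e2 : x^2 * (B - mu) + y^2 * (A - mu) = (A - mu) * (B - mu) := by
    field_simp at h2; linear_combination h2
  have hx2' : x^2 * (A - B) * (mu - lam) = (A - lam) * (A - mu) * (mu - lam) := by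
    linear_combination (A - mu) * e1 - (A - lam) * e2
  have hx2 : x^2 = (A - lam) * (A - mu) / (A - B) := by
    rw [eq_div_iff dAB]; exact mul_right_cancel₀ dml hx2'
  have hy2' : y^2 * (A - B) * (mu - lam) = (B - lam) * (mu - B) * (mu - lam) := by
    linear_combination (mu - B) * e1 - (lam - B) * e2
  have hy2 : y^2 = (B - lam) * (mu - B) / (A - B) := by
    rw [eq_div_iff dAB]; exact mul_right_cancel₀ dml hy2'
  constructor
  · rw [← hx2, Real.sqrt_sq hx]
  · rw [← hy2, Real.sqrt_sq hy]

lemma sub_sq_sqrt (a b : ℝ) (ha : 0 ≤ a) (hb : 0 ≤ b) :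
    (Real.sqrt a - Real.sqrt b)^2 = a + b - 2 * Real.sqrt (a * b) := by
  rw [sub_sq, Real.sq_sqrt ha, Real.sq_sqrt hb, Real.sqrt_mul ha]; ring

/-- Planar Ivory lemma for confocal conics. -/
theorem ivory_lemma_plane
    (A B lam₁ lam₁' lam₂ lam₂' : ℝ)
    (hAB : B < A) (hB : 0 < B)
    (h1 : lam₁ < lam₁') (h1' : lam₁' < B)
    (h2 : B < lam₂) (h2' : lam₂ < lam₂') (h2'' : lam₂' < A)
    (P P' Q Q' : ℝ × ℝ)
    (hPpos : 0 ≤ P.1 ∧ 0 ≤ P.2) (hP'pos : 0 ≤ P'.1 ∧ 0 ≤ P'.2)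
    (hQpos : 0 ≤ Q.1 ∧ 0 ≤ Q.2) (hQ'pos : 0 ≤ Q'.1 ∧ 0 ≤ Q'.2)
    (hPE : P.1^2 / (A - lam₁) + P.2^2 / (B - lam₁) = 1)
    (hPH : P.1^2 / (A - lam₂) + P.2^2 / (B - lam₂) = 1)
    (hP'E : P'.1^2 / (A - lam₁) + P'.2^2 / (B - lam₁) = 1)
    (hP'H : P'.1^2 / (A - lam₂') + P'.2^2 / (B - lam₂') = 1)
    (hQE : Q.1^2 / (A - lam₁') + Q.2^2 / (B - lam₁') = 1)
    (hQH : Q.1^2 / (A - lam₂) + Q.2^2 / (B - lam₂) = 1)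
    (hQ'E : Q'.1^2 / (A - lam₁') + Q'.2^2 / (B - lam₁') = 1)
    (hQ'H : Q'.1^2 / (A - lam₂') + Q'.2^2 / (B - lam₂') = 1) :
    Real.sqrt ((P.1 - Q'.1)^2 + (P.2 - Q'.2)^2) =
      Real.sqrt ((P'.1 - Q.1)^2 + (P'.2 - Q.2)^2) := by
  obtain ⟨hP1, hP2⟩ := ivory_coords A B lam₁ lam₂ P.1 P.2 hAB (by linarith) h2
    (by linarith) hPpos.1 hPpos.2 hPE hPH
  obtain ⟨hP'1, hP'2⟩ := ivory_coords A B lam₁ lam₂' P'.1 P'.2 hAB (by linarith) (by linarith)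
    h2'' hP'pos.1 hP'pos.2 hP'E hP'H
  obtain ⟨hQ1, hQ2⟩ := ivory_coords A B lam₁' lam₂ Q.1 Q.2 hAB h1' h2
    (by linarith) hQpos.1 hQpos.2 hQE hQH
  obtain ⟨hQ'1, hQ'2⟩ := ivory_coords A B lam₁' lam₂' Q'.1 Q'.2 hAB h1' (by linarith)
    h2'' hQ'pos.1 hQ'pos.2 hQ'E hQ'H
  have hABpos : (0:ℝ) ≤ A - B := by linarith
  have n1 : (0:ℝ) ≤ (A - lam₁) * (A - lam₂) / (A - B) :=
    div_nonneg (mul_nonneg (by linarith) (by linarith)) hABpos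
  have n2 : (0:ℝ) ≤ (B - lam₁) * (lam₂ - B) / (A - B) :=
    div_nonneg (mul_nonneg (by linarith) (by linarith)) hABpos
  have n3 : (0:ℝ) ≤ (A - lam₁) * (A - lam₂') / (A - B) :=
    div_nonneg (mul_nonneg (by linarith) (by linarith)) hABpos
  have n4 : (0:ℝ) ≤ (B - lam₁) * (lam₂' - B) / (A - B) :=
    div_nonneg (mul_nonneg (by linarith) (by linarith)) hABpos
  have n5 : (0:ℝ) ≤ (A - lam₁') * (A - lam₂) / (A - B) :=
    div_nonneg (mul_nonneg (by linarith) (by linarith)) hABpos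
  have n6 : (0:ℝ) ≤ (B - lam₁') * (lam₂ - B) / (A - B) :=
    div_nonneg (mul_nonneg (by linarith) (by linarith)) hABpos
  have n7 : (0:ℝ) ≤ (A - lam₁') * (A - lam₂') / (A - B) :=
    div_nonneg (mul_nonneg (by linarith) (by linarith)) hABpos
  have n8 : (0:ℝ) ≤ (B - lam₁') * (lam₂' - B) / (A - B) :=
    div_nonneg (mul_nonneg (by linarith) (by linarith)) hABpos
  congr 1
  rw [hP1, hP2, hP'1, hP'2, hQ1, hQ2, hQ'1, hQ'2,
    sub_sq_sqrt _ _ n1 n7, sub_sq_sqrt _ _ n2 n8,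
    sub_sq_sqrt _ _ n3 n5, sub_sq_sqrt _ _ n4 n6]
  rw [show (A - lam₁) * (A - lam₂) / (A - B) * ((A - lam₁') * (A - lam₂') / (A - B))
      = (A - lam₁) * (A - lam₂') / (A - B) * ((A - lam₁') * (A - lam₂) / (A - B)) from by ring,
    show (B - lam₁) * (lam₂ - B) / (A - B) * ((B - lam₁') * (lam₂' - B) / (A - B))
      = (B - lam₁) * (lam₂' - B) / (A - B) * ((B - lam₁') * (lam₂ - B) / (A - B)) from by ring]
  have hABne : A - B ≠ 0 := by linarith
  field_simp
  ring
end

section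
/- In the planar Ivory configuration, the diagonal map acts by coordinate scaling: the linear map D(x, y) = (px, qy) with p = sqrt((A−λ₁')/(A−λ₁)) and q = sqrt((B−λ₁')/(B−λ₁)) sends the ellipse Q(λ₁) to the ellipse Q(λ₁'), and maps any point of Q(λ₁) ∩ Q(λ₂) (in the closed first quadrant) to a point of Q(λ₁') ∩ Q(λ₂). -/
/-- The diagonal map of the Ivory configuration acts by coordinate scaling. -/
theorem ivory_diagonal_map
    (A B lam₁ lam₁' lam₂ : ℝ)
    (hAB : B < A) (hB : 0 < B)
    (h1 : lam₁ < lam₁') (h1' : lam₁' < B)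
    (h2 : B < lam₂) (h2' : lam₂ < A) :
    (∀ P : ℝ × ℝ, P.1^2 / (A - lam₁) + P.2^2 / (B - lam₁) = 1 →
      (Real.sqrt ((A - lam₁') / (A - lam₁)) * P.1)^2 / (A - lam₁')
        + (Real.sqrt ((B - lam₁') / (B - lam₁)) * P.2)^2 / (B - lam₁') = 1) ∧
    (∀ P : ℝ × ℝ, 0 ≤ P.1 → 0 ≤ P.2 →
      P.1^2 / (A - lam₁) + P.2^2 / (B - lam₁) = 1 →
      P.1^2 / (A - lam₂) + P.2^2 / (B - lam₂) = 1 →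
      (Real.sqrt ((A - lam₁') / (A - lam₁)) * P.1)^2 / (A - lam₁')
        + (Real.sqrt ((B - lam₁') / (B - lam₁)) * P.2)^2 / (B - lam₁') = 1 ∧
      (Real.sqrt ((A - lam₁') / (A - lam₁)) * P.1)^2 / (A - lam₂)
        + (Real.sqrt ((B - lam₁') / (B - lam₁)) * P.2)^2 / (B - lam₂) = 1) := by
  have ha1 : (0:ℝ) < A - lam₁ := by linarith
  have ha1' : (0:ℝ) < A - lam₁' := by linarith
  have hb1 : (0:ℝ) < B - lam₁ := by linarith
  have hb1' : (0:ℝ) < B - lam₁' := by linarith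
  have ha2 : (0:ℝ) < A - lam₂ := by linarith
  have hb2 : B - lam₂ ≠ 0 := by linarith
  have hab : A - B ≠ 0 := by linarith
  have key : ∀ x : ℝ, (Real.sqrt ((A - lam₁') / (A - lam₁)) * x)^2
      = (A - lam₁') / (A - lam₁) * x^2 := by
    intro x
    rw [mul_pow, Real.sq_sqrt (by positivity)]
  have key2 : ∀ y : ℝ, (Real.sqrt ((B - lam₁') / (B - lam₁)) * y)^2
      = (B - lam₁') / (B - lam₁) * y^2 := by
    intro y
    rw [mul_pow, Real.sq_sqrt (by positivity)]
  constructor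
  · intro P hP
    rw [key, key2]
    field_simp at hP ⊢
    linear_combination hP
  · intro P _ _ hP1 hP2
    have hl : lam₂ - lam₁ ≠ 0 := by linarith
    have hP1' := hP1; have hP2' := hP2
    field_simp at hP1' hP2'
    have hx2 : P.1^2 = (A - lam₁) * (A - lam₂) / (A - B) := by
      have h : (lam₂ - lam₁) * (P.1^2 * (A - B))
          = (lam₂ - lam₁) * ((A - lam₁) * (A - lam₂)) := by
        linear_combination (A - lam₂) * hP1' - (A - lam₁) * hP2'
      rw [eq_div_iff hab]
      linarith [mul_left_cancel₀ hl h]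
    have hy2 : P.2^2 = (B - lam₁) * (lam₂ - B) / (A - B) := by
      have h : (lam₂ - lam₁) * (P.2^2 * (A - B))
          = (lam₂ - lam₁) * ((B - lam₁) * (lam₂ - B)) := by
        linear_combination (B - lam₁) * hP2' - (B - lam₂) * hP1'
      rw [eq_div_iff hab]
      linarith [mul_left_cancel₀ hl h]
    rw [key, key2, hx2, hy2]
    constructor
    · field_simp
      ring
    · field_simp
      ring
end

section
/- Euclidean Regge symmetry (existence and volume): if a Euclidean tetrahedron exists with edge lengths x, y, a, b, c, d (x opposite y; faces as in the Regge configuration: triangles (x,a,b), (x,c,d), (y,a,d), (y,b,c)), then a Euclidean tetrahedron exists with edge lengths x, y, s−a, s−b, s−c, s−d where s = (a+b+c+d)/2, and the two tetrahedra have equal volume. -/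
/-- The volume of the tetrahedron with vertices `P 0, P 1, P 2, P 3`. -/
noncomputable def tetVolume (P : Fin 4 → EuclideanSpace ℝ (Fin 3)) : ℝ :=
  (1/6) * |Matrix.det (Matrix.of fun i j : Fin 3 => (P i.succ - P 0) j)|

noncomputable section

local notation "E" => EuclideanSpace ℝ (Fin 3)

/-- Gram-determinant polynomial in the six squared edge lengths. -/
noncomputable def gramPoly (X Y A B C D : ℝ) : ℝ :=
  X*A*D + 2*((X+A-B)/2)*((X+D-C)/2)*((A+D-Y)/2)
    - X*((A+D-Y)/2)^2 - A*((X+D-C)/2)^2 - D*((X+A-B)/2)^2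

lemma gramPoly_param (x y k p q h2 A B C D : ℝ)
    (hA : A = (p+x/2)^2+(q+y/2)^2-2*k*(p+x/2)*(q+y/2)+h2)
    (hB : B = (p-x/2)^2+(q+y/2)^2-2*k*(p-x/2)*(q+y/2)+h2)
    (hC : C = (p-x/2)^2+(q-y/2)^2-2*k*(p-x/2)*(q-y/2)+h2)
    (hD : D = (p+x/2)^2+(q-y/2)^2-2*k*(p+x/2)*(q-y/2)+h2) :
    gramPoly (x^2) (y^2) A B C D = x^2*y^2*(1-k^2)*h2 := by
  subst hA hB hC hD; simp only [gramPoly]; ring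

lemma gramPoly_regge (x y a b c d : ℝ) :
    gramPoly (x^2) (y^2) (((a+b+c+d)/2-a)^2) (((a+b+c+d)/2-b)^2)
      (((a+b+c+d)/2-c)^2) (((a+b+c+d)/2-d)^2)
      = gramPoly (x^2) (y^2) (a^2) (b^2) (c^2) (d^2) := by
  simp only [gramPoly]; ring

lemma es_sub_apply (f g : EuclideanSpace ℝ (Fin 3)) (j : Fin 3) : (f - g) j = f j - g j := rfl

lemma es_dist_sq (u v : EuclideanSpace ℝ (Fin 3)) :
    dist u v ^ 2 = (u 0 - v 0)^2 + (u 1 - v 1)^2 + (u 2 - v 2)^2 := by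
  rw [EuclideanSpace.dist_eq, Real.sq_sqrt (by positivity)]
  rw [Fin.sum_univ_three]; simp [Real.dist_eq, sq_abs]

lemma eq_of_sq_eq_sq {u v : ℝ} (hu : 0 ≤ u) (hv : 0 ≤ v) (h : u^2 = v^2) : u = v := by
  rw [← Real.sqrt_sq hu, ← Real.sqrt_sq hv, h]

lemma det_sq_eq_gram (P : Fin 4 → EuclideanSpace ℝ (Fin 3)) :
    (Matrix.det (Matrix.of fun i j : Fin 3 => (P i.succ - P 0) j))^2
      = gramPoly (dist (P 0) (P 1) ^ 2) (dist (P 2) (P 3) ^ 2) (dist (P 0) (P 2) ^ 2)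
          (dist (P 1) (P 2) ^ 2) (dist (P 1) (P 3) ^ 2) (dist (P 0) (P 3) ^ 2) := by
  simp only [Matrix.det_fin_three, Matrix.of_apply, es_sub_apply, es_dist_sq, gramPoly,
    show (0 : Fin 3).succ = (1 : Fin 4) from rfl, show (1 : Fin 3).succ = (2 : Fin 4) from rfl,
    show (2 : Fin 3).succ = (3 : Fin 4) from rfl]
  ring

def finEquiv : Fin 3 ≃ {x : Fin 4 // x ≠ 0} where
  toFun i := ⟨i.succ, Fin.succ_ne_zero i⟩
  invFun x := (x : Fin 4).pred x.2
  left_inv i := by simp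
  right_inv x := by simp

lemma affineIndependent_iff_li (p : Fin 4 → E) :
    AffineIndependent ℝ p ↔ LinearIndependent ℝ (fun i : Fin 3 => p i.succ - p 0) := by
  rw [affineIndependent_iff_linearIndependent_vsub ℝ p 0,
    ← linearIndependent_equiv finEquiv]
  rfl

lemma det_ne_zero_iff_affine (P : Fin 4 → E) :
    Matrix.det (Matrix.of fun i j : Fin 3 => (P i.succ - P 0) j) ≠ 0
      ↔ AffineIndependent ℝ P := by
  rw [affineIndependent_iff_li]
  rw [← isUnit_iff_ne_zero, ← Matrix.isUnit_iff_isUnit_det,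
    ← Matrix.linearIndependent_rows_iff_isUnit]
  set L := WithLp.linearEquiv 2 ℝ (Fin 3 → ℝ)
  constructor
  · intro h
    exact h.map' L.symm.toLinearMap L.symm.ker
  · intro h
    exact h.map' L.toLinearMap L.ker

lemma strict_ptolemy (p : Fin 4 → E) (hp : AffineIndependent ℝ p) :
    dist (p 0) (p 2) * dist (p 1) (p 3)
      < dist (p 0) (p 1) * dist (p 2) (p 3) + dist (p 1) (p 2) * dist (p 0) (p 3) := by
  classical
  have hinj := hp.injective
  have hb : p 1 ≠ p 0 := fun h => by simpa using hinj h
  have hc : p 2 ≠ p 0 := fun h => by simpa using hinj h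
  have hd : p 3 ≠ p 0 := fun h => by simpa using hinj h
  set a := p 0
  set b' := EuclideanGeometry.inversion a 1 (p 1) with hb'
  set c' := EuclideanGeometry.inversion a 1 (p 2) with hc'
  set d' := EuclideanGeometry.inversion a 1 (p 3) with hd'
  have H : dist b' d' ≤ dist b' c' + dist c' d' := dist_triangle _ _ _
  have Hne : dist b' d' ≠ dist b' c' + dist c' d' := by
    intro heq
    have hW : Wbtw ℝ b' c' d' := dist_add_dist_eq_iff.mp heq.symm
    obtain ⟨t, _, hlin⟩ := hW
    have hli := (affineIndependent_iff_li p).mp hp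
    have hform : ∀ z : E, z ≠ a →
        EuclideanGeometry.inversion a 1 z - a = ((1 / dist z a)^2) • (z - a) := by
      intro z hz
      simp [EuclideanGeometry.inversion, vsub_eq_sub, vadd_eq_add]
    have hcnz : (1 / dist (p 2) a)^2 ≠ 0 := by
      have : dist (p 2) a ≠ 0 := dist_ne_zero.mpr hc
      positivity
    have hc2 : p 2 - a = ((1 / dist (p 2) a)^2)⁻¹ • (c' - a) := by
      rw [hc', hform _ hc, smul_smul, inv_mul_cancel₀ hcnz, one_smul]
    have hlin' : c' - a = (1 - t) • (b' - a) + t • (d' - a) := by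
      have := hlin
      rw [AffineMap.lineMap_apply] at this
      rw [← this]
      simp [vsub_eq_sub, vadd_eq_add]
      module
    set γ := ((1 / dist (p 2) a)^2)⁻¹ * ((1 - t) * (1 / dist (p 1) a)^2) with hγ
    set δ := ((1 / dist (p 2) a)^2)⁻¹ * (t * (1 / dist (p 3) a)^2) with hδ
    have hrel : p 2 - a = γ • (p 1 - a) + δ • (p 3 - a) := by
      rw [hc2, hlin', smul_add, hb', hd', hform _ hb, hform _ hd, smul_smul, smul_smul,
        hγ, hδ]
      module
    have := Fintype.linearIndependent_iff.mp hli ![γ, -1, δ] ?_ 1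
    · norm_num at this
    · rw [Fin.sum_univ_three]
      simp only [Matrix.cons_val_zero, Matrix.cons_val_one, Matrix.head_cons,
        Matrix.cons_val_two, Matrix.tail_cons,
        show (0 : Fin 3).succ = (1 : Fin 4) from rfl, show (1 : Fin 3).succ = (2 : Fin 4) from rfl,
        show (2 : Fin 3).succ = (3 : Fin 4) from rfl]
      rw [neg_one_smul]
      rw [show p 2 - p 0 = γ • (p 1 - a) + δ • (p 3 - a) from hrel]
      module
  have Hlt : dist b' d' < dist b' c' + dist c' d' := lt_of_le_of_ne H Hne
  rw [hb', hc', hd'] at Hlt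
  rw [EuclideanGeometry.dist_inversion_inversion hb hd,
    EuclideanGeometry.dist_inversion_inversion hb hc,
    EuclideanGeometry.dist_inversion_inversion hc hd, one_pow] at Hlt
  rw [← dist_pos] at hb hc hd
  rw [← div_lt_div_iff_of_pos_right (c := dist (p 1) a * (dist (p 2) a * dist (p 3) a))
    (mul_pos hb (mul_pos hc hd))]
  · convert Hlt using 1
    · rfl
    · simp only [dist_comm a (p 1), dist_comm a (p 2), dist_comm a (p 3)]
      field_simp [hb.ne', hc.ne', hd.ne']
    · simp only [dist_comm a (p 1), dist_comm a (p 2), dist_comm a (p 3)]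
      field_simp [hb.ne', hc.ne', hd.ne']; ring


set_option maxHeartbeats 2000000 in
/-- Euclidean Regge symmetry: existence and equality of volumes. -/
theorem regge_euclidean_existence_and_volume
    (x y a b c d : ℝ) (P : Fin 4 → EuclideanSpace ℝ (Fin 3))
    (hP : AffineIndependent ℝ P)
    (h12 : dist (P 0) (P 1) = x) (h34 : dist (P 2) (P 3) = y)
    (h13 : dist (P 0) (P 2) = a) (h23 : dist (P 1) (P 2) = b)
    (h24 : dist (P 1) (P 3) = c) (h14 : dist (P 0) (P 3) = d) :
    ∃ Q : Fin 4 → EuclideanSpace ℝ (Fin 3),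
      AffineIndependent ℝ Q ∧
      dist (Q 0) (Q 1) = x ∧ dist (Q 2) (Q 3) = y ∧
      dist (Q 0) (Q 2) = (a+b+c+d)/2 - a ∧ dist (Q 1) (Q 2) = (a+b+c+d)/2 - b ∧
      dist (Q 1) (Q 3) = (a+b+c+d)/2 - c ∧ dist (Q 0) (Q 3) = (a+b+c+d)/2 - d ∧
      tetVolume Q = tetVolume P := by
  have hinj := hP.injective
  have hx : 0 < x := h12 ▸ dist_pos.mpr (fun h => by simpa using hinj h)
  have hy : 0 < y := h34 ▸ dist_pos.mpr (fun h => by simpa using hinj h)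
  -- triangle inequalities from the faces
  have T1 : a ≤ d + y := by
    have h := dist_triangle (P 0) (P 3) (P 2)
    rw [h13, h14, dist_comm (P 3) (P 2), h34] at h; exact h
  have T2 : y ≤ b + c := by
    have h := dist_triangle (P 2) (P 1) (P 3)
    rw [h34, dist_comm (P 2) (P 1), h23, h24] at h; exact h
  have T3 : b ≤ c + y := by
    have h := dist_triangle (P 1) (P 3) (P 2)
    rw [h23, h24, dist_comm (P 3) (P 2), h34] at h; exact h
  have T4 : y ≤ a + d := by
    have h := dist_triangle (P 2) (P 0) (P 3)
    rw [h34, dist_comm (P 2) (P 0), h13, h14] at h; exact h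
  have T5 : c ≤ b + y := by
    have h := dist_triangle (P 1) (P 2) (P 3)
    rw [h24, h23, h34] at h; exact h
  have T6 : d ≤ a + y := by
    have h := dist_triangle (P 0) (P 2) (P 3)
    rw [h14, h13, h34] at h; exact h
  have hta : 0 ≤ (a+b+c+d)/2 - a := by linarith
  have htb : 0 ≤ (a+b+c+d)/2 - b := by linarith
  have htc : 0 ≤ (a+b+c+d)/2 - c := by linarith
  have htd : 0 ≤ (a+b+c+d)/2 - d := by linarith
  -- strict Ptolemy inequalities
  have pt1 : a*c < x*y + b*d := by
    have h := strict_ptolemy P hP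
    rw [h13, h24, h12, h34, h23, h14] at h; exact h
  have pt2 : b*d < x*y + a*c := by
    have h := strict_ptolemy (P ∘ (Equiv.swap (0:Fin 4) 1))
      (hP.comp_embedding (Equiv.swap (0:Fin 4) 1).toEmbedding)
    have e0 : Equiv.swap (0:Fin 4) 1 0 = 1 := Equiv.swap_apply_left 0 1
    have e1 : Equiv.swap (0:Fin 4) 1 1 = 0 := Equiv.swap_apply_right 0 1
    have e2 : Equiv.swap (0:Fin 4) 1 2 = 2 :=
      Equiv.swap_apply_of_ne_of_ne (by decide) (by decide)
    have e3 : Equiv.swap (0:Fin 4) 1 3 = 3 :=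
      Equiv.swap_apply_of_ne_of_ne (by decide) (by decide)
    simp only [Function.comp_apply, e0, e1, e2, e3] at h
    rw [dist_comm (P 1) (P 0), h12, h34, h23, h14, h13, h24] at h
    linarith
  -- the Regge parameters
  set k := (a*c - b*d)/(x*y) with hk_def
  have hk : k*(x*y) = a*c - b*d := by
    rw [hk_def]; field_simp
  have hm : 0 < 1 - k^2 := by
    have h1 : 0 < x*y - (a*c - b*d) := by linarith
    have h2 : 0 < x*y + (a*c - b*d) := by linarith
    have h3 : (a*c - b*d)^2 < (x*y)^2 := by nlinarith [mul_pos h1 h2]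
    have : k^2 < 1 := by
      rw [hk_def, div_pow, div_lt_one (by positivity)]; exact h3
    linarith
  clear_value k
  set p := ((((a+b+c+d)/2-a)^2 - ((a+b+c+d)/2-b)^2 + ((a+b+c+d)/2-d)^2 - ((a+b+c+d)/2-c)^2)/(4*x)
      + k*((((a+b+c+d)/2-a)^2 + ((a+b+c+d)/2-b)^2 - ((a+b+c+d)/2-c)^2 - ((a+b+c+d)/2-d)^2)/(4*y)))/(1-k^2) with hp_def
  set q := (((((a+b+c+d)/2-a)^2 + ((a+b+c+d)/2-b)^2 - ((a+b+c+d)/2-c)^2 - ((a+b+c+d)/2-d)^2)/(4*y))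
      + k*((((a+b+c+d)/2-a)^2 - ((a+b+c+d)/2-b)^2 + ((a+b+c+d)/2-d)^2 - ((a+b+c+d)/2-c)^2)/(4*x)))/(1-k^2) with hq_def
  clear_value p q
  have hp4x : (p - k*q)*(4*x) = ((a+b+c+d)/2-a)^2 - ((a+b+c+d)/2-b)^2 + ((a+b+c+d)/2-d)^2 - ((a+b+c+d)/2-c)^2 := by
    rw [hp_def, hq_def]; field_simp; ring
  have hq4y : (q - k*p)*(4*y) = ((a+b+c+d)/2-a)^2 + ((a+b+c+d)/2-b)^2 - ((a+b+c+d)/2-c)^2 - ((a+b+c+d)/2-d)^2 := by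
    rw [hp_def, hq_def]; field_simp; ring
  set h2 := ((a+b+c+d)/2-a)^2 - ((p+x/2)^2 + (q+y/2)^2 - 2*k*(p+x/2)*(q+y/2)) with hh2_def
  clear_value h2
  have hA : ((a+b+c+d)/2-a)^2 = (p+x/2)^2+(q+y/2)^2-2*k*(p+x/2)*(q+y/2)+h2 := by
    rw [hh2_def]; ring
  have hB : ((a+b+c+d)/2-b)^2 = (p-x/2)^2+(q+y/2)^2-2*k*(p-x/2)*(q+y/2)+h2 := by
    linear_combination hA + hp4x/2 - hk
  have hC : ((a+b+c+d)/2-c)^2 = (p-x/2)^2+(q-y/2)^2-2*k*(p-x/2)*(q-y/2)+h2 := by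
    linear_combination hB + hq4y/2 + hk
  have hD : ((a+b+c+d)/2-d)^2 = (p+x/2)^2+(q-y/2)^2-2*k*(p+x/2)*(q-y/2)+h2 := by
    linear_combination hA + hq4y/2 - hk
  have hGram := gramPoly_param x y k p q h2 _ _ _ _ hA hB hC hD
  have hdetP2 := det_sq_eq_gram P
  rw [h12, h34, h13, h23, h24, h14] at hdetP2
  have hdetne : Matrix.det (Matrix.of fun i j : Fin 3 => (P i.succ - P 0) j) ≠ 0 :=
    (det_ne_zero_iff_affine P).mpr hP
  set detP := Matrix.det (Matrix.of fun i j : Fin 3 => (P i.succ - P 0) j) with hdp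
  clear_value detP
  have hregge := gramPoly_regge x y a b c d
  have key : x^2*y^2*(1-k^2)*h2 = detP^2 := by
    rw [← hGram, hregge]; exact hdetP2.symm
  have hdp2 : 0 < detP^2 := lt_of_le_of_ne (sq_nonneg _) (Ne.symm (pow_ne_zero 2 hdetne))
  have hpos : 0 < x^2*y^2*(1-k^2) :=
    mul_pos (mul_pos (pow_pos hx 2) (pow_pos hy 2)) hm
  have hh2pos : 0 < h2 := by
    have hh2eq : h2 = detP^2 / (x^2*y^2*(1-k^2)) := by
      rw [eq_div_iff hpos.ne']; linear_combination key
    rw [hh2eq]; exact div_pos hdp2 hpos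
  set w := Real.sqrt (1 - k^2) with hw_def
  set ht := Real.sqrt h2 with hht_def
  have hw2 : w^2 = 1 - k^2 := Real.sq_sqrt hm.le
  have hwpos : 0 < w := Real.sqrt_pos.mpr hm
  have hht2 : ht^2 = h2 := Real.sq_sqrt hh2pos.le
  have hhtpos : 0 < ht := Real.sqrt_pos.mpr hh2pos
  clear_value w ht
  set Q : Fin 4 → EuclideanSpace ℝ (Fin 3) := fun i =>
    (WithLp.equiv 2 (Fin 3 → ℝ)).symm
      (![![p+x/2, 0, 0], ![p-x/2, 0, 0],
         ![(q+y/2)*k, (q+y/2)*w, ht], ![(q-y/2)*k, (q-y/2)*w, ht]] i) with hQ_def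
  have hQ00 : Q 0 0 = p+x/2 := rfl
  have hQ01 : Q 0 1 = 0 := rfl
  have hQ02 : Q 0 2 = 0 := rfl
  have hQ10 : Q 1 0 = p-x/2 := rfl
  have hQ11 : Q 1 1 = 0 := rfl
  have hQ12 : Q 1 2 = 0 := rfl
  have hQ20 : Q 2 0 = (q+y/2)*k := rfl
  have hQ21 : Q 2 1 = (q+y/2)*w := rfl
  have hQ22 : Q 2 2 = ht := rfl
  have hQ30 : Q 3 0 = (q-y/2)*k := rfl
  have hQ31 : Q 3 1 = (q-y/2)*w := rfl
  have hQ32 : Q 3 2 = ht := rfl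
  have hdetQ : Matrix.det (Matrix.of fun i j : Fin 3 => (Q i.succ - Q 0) j) = -(x*y*w*ht) := by
    simp only [Matrix.det_fin_three, Matrix.of_apply, es_sub_apply,
      show (0 : Fin 3).succ = (1 : Fin 4) from rfl, show (1 : Fin 3).succ = (2 : Fin 4) from rfl,
      show (2 : Fin 3).succ = (3 : Fin 4) from rfl,
      hQ00, hQ01, hQ02, hQ10, hQ11, hQ12, hQ20, hQ21, hQ22, hQ30, hQ31, hQ32]
    ring
  refine ⟨Q, ?_, ?_, ?_, ?_, ?_, ?_, ?_, ?_⟩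
  · exact (det_ne_zero_iff_affine Q).mp (by rw [hdetQ]; exact neg_ne_zero.mpr (by positivity))
  · apply eq_of_sq_eq_sq dist_nonneg hx.le
    rw [es_dist_sq, hQ00, hQ01, hQ02, hQ10, hQ11, hQ12]; ring
  · apply eq_of_sq_eq_sq dist_nonneg hy.le
    rw [es_dist_sq, hQ20, hQ21, hQ22, hQ30, hQ31, hQ32]
    linear_combination (y^2)*hw2
  · apply eq_of_sq_eq_sq dist_nonneg hta
    rw [es_dist_sq, hQ00, hQ01, hQ02, hQ20, hQ21, hQ22]
    linear_combination (q+y/2)^2*hw2 + hht2 - hA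
  · apply eq_of_sq_eq_sq dist_nonneg htb
    rw [es_dist_sq, hQ10, hQ11, hQ12, hQ20, hQ21, hQ22]
    linear_combination (q+y/2)^2*hw2 + hht2 - hB
  · apply eq_of_sq_eq_sq dist_nonneg htc
    rw [es_dist_sq, hQ10, hQ11, hQ12, hQ30, hQ31, hQ32]
    linear_combination (q-y/2)^2*hw2 + hht2 - hC
  · apply eq_of_sq_eq_sq dist_nonneg htd
    rw [es_dist_sq, hQ00, hQ01, hQ02, hQ30, hQ31, hQ32]
    linear_combination (q-y/2)^2*hw2 + hht2 - hD
  · simp only [tetVolume]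
    rw [hdetQ, ← hdp, abs_neg]
    have h1 : |x*y*w*ht| = x*y*w*ht := abs_of_pos (by positivity)
    have h2' : x*y*w*ht = |detP| := by
      apply eq_of_sq_eq_sq (by positivity) (abs_nonneg _)
      rw [sq_abs]
      linear_combination (x^2*y^2*ht^2)*hw2 + (x^2*y^2*(1-k^2))*hht2 + key
    rw [h1, h2']

end
end
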